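/- arXiv:2601.22334 — 2 statements merged into one kernel-verified Lean document; each statement's English description precedes it below -/
import Mathlib

section
/- Let n ≥ 1, let A be the n×n prefix-sum matrix, and let C = diag(c_1, …, c_n) be any diagonal matrix with positive diagonal entries. Then (1/√n)·‖A C^{-1}‖_F·‖Ce‖₂ ≥ (1/√n) ∑_{j=1}^{n} √j, with equality when c_j = (n − j + 1)^{1/4} for all j; that is, the diagonal matrix with entries (n − j + 1)^{1/4} is optimal among all positive diagonal factorizations for the full-batch RMSE. -/
/-!
Writing `C = diag(c)`, the Frobenius norm of `A C⁻¹` is `√(∑ⱼ (n - j)/cⱼ²)` (column `j` of `A`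
has `n - j` ones) and `‖Ce‖₂ = √(∑ⱼ cⱼ²)`. Cauchy–Schwarz applied to `√(n - j)/cⱼ` and `cⱼ` bounds
the product below by `∑ⱼ √(n - j) = ∑_{k=1}^n √k`, and the choice `cⱼ = (n - j)^{1/4}` makes the
two vectors proportional.
-/

open Finset

/-- Euclidean norm of a vector in `ℝⁿ`. -/
noncomputable def norm2 {n : ℕ} (v : Fin n → ℝ) : ℝ := Real.sqrt (∑ i, v i ^ 2)

/-- Frobenius norm of a square matrix. -/
noncomputable def frob {n : ℕ} (B : Matrix (Fin n) (Fin n) ℝ) : ℝ :=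
  Real.sqrt (∑ i, ∑ j, B i j ^ 2)

/-- `‖B‖_{2→∞}`: the maximum Euclidean norm of a row of `B`. -/
noncomputable def rowMax {n : ℕ} (B : Matrix (Fin n) (Fin n) ℝ) : ℝ :=
  ⨆ i : Fin n, norm2 (fun j => B i j)

/-- The `n × n` prefix-sum matrix: lower triangular, all entries on or below the diagonal are 1. -/
def Amat (n : ℕ) : Matrix (Fin n) (Fin n) ℝ :=
  fun i j => if (j : ℕ) ≤ (i : ℕ) then 1 else 0

/-- The DP-λCGD strategy matrix `C_λ`: lower triangular Toeplitz with `(C_λ)_{ij} = λ^{i-j}`. -/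
noncomputable def Cmat (n : ℕ) (l : ℝ) : Matrix (Fin n) (Fin n) ℝ :=
  fun i j => if (j : ℕ) ≤ (i : ℕ) then l ^ ((i : ℕ) - (j : ℕ)) else 0

/-- The inverse `C_λ⁻¹`: ones on the diagonal, `-λ` on the first subdiagonal, zero elsewhere. -/
noncomputable def Cinvmat (n : ℕ) (l : ℝ) : Matrix (Fin n) (Fin n) ℝ :=
  fun i j => if (i : ℕ) = (j : ℕ) then 1 else if (i : ℕ) = (j : ℕ) + 1 then -l else 0

/-- `sens_{k,b}(C)`: Euclidean norm of `∑_{j=0}^{k-1} C_{:,jb+1}` (columns 1-indexed, so the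
column of 1-based index `j*b + 1` is the column of `Fin`-index `j*b`). -/
noncomputable def sens (n k b : ℕ) (C : Matrix (Fin n) (Fin n) ℝ) : ℝ :=
  norm2 (fun i => ∑ j ∈ Finset.range k, if h : j * b < n then C i ⟨j * b, h⟩ else 0)

/-- `d_j`: Euclidean norm of the `j`-th column of `C_λ`. -/
noncomputable def dcol (n : ℕ) (l : ℝ) (j : Fin n) : ℝ :=
  norm2 (fun i => Cmat n l i j)

/-- The column-normalized DP-λCGD strategy matrix `C̃ = C_λ D⁻¹`. -/
noncomputable def Ctil (n : ℕ) (l : ℝ) : Matrix (Fin n) (Fin n) ℝ :=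
  Cmat n l * (Matrix.diagonal (dcol n l))⁻¹

open Matrix

theorem Matrix.inv_diagonal_of_ne_zero {ι K : Type*} [Fintype ι] [DecidableEq ι] [Field K]
    (c : ι → K) (hc : ∀ i, c i ≠ 0) : (diagonal c)⁻¹ = diagonal c⁻¹ := by
  refine inv_eq_right_inv ?_
  rw [diagonal_mul_diagonal, ← diagonal_one]
  exact congrArg diagonal (funext fun i => mul_inv_cancel₀ (hc i))

theorem frob_mul_diagonal {n : ℕ} (B : Matrix (Fin n) (Fin n) ℝ) (d : Fin n → ℝ) :
    frob (B * diagonal d) = √(∑ j, (∑ i, B i j ^ 2) * d j ^ 2) := by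
  simp only [frob, mul_diagonal, mul_pow]
  rw [sum_comm]
  simp only [sum_mul]

theorem sum_Amat_sq {n : ℕ} (j : Fin n) : ∑ i, Amat n i j ^ 2 = ((n - j : ℕ) : ℝ) := by
  have hA : ∀ i, Amat n i j ^ 2 = if j ≤ i then 1 else 0 := fun i => by
    simp only [Amat, Fin.le_def]
    split_ifs <;> norm_num
  simp only [hA, sum_boole, ← Fin.card_Ici, filter_le_eq_Ici]

theorem frob_Amat_mul_inv_diagonal {n : ℕ} (c : Fin n → ℝ) (hc : ∀ j, c j ≠ 0) :
    frob (Amat n * (diagonal c)⁻¹) = √(∑ j : Fin n, ((n - j : ℕ) : ℝ) / c j ^ 2) := by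
  simp only [inv_diagonal_of_ne_zero c hc, frob_mul_diagonal, sum_Amat_sq, Pi.inv_apply, inv_pow,
    div_eq_mul_inv]

theorem norm2_diagonal_mulVec_one {n : ℕ} (c : Fin n → ℝ) :
    norm2 (diagonal c *ᵥ fun _ => 1) = √(∑ j, c j ^ 2) := by
  simp [norm2, mulVec_diagonal]

theorem sum_sqrt_le_sqrt_sum_div_sq_mul_sqrt_sum_sq {ι : Type*} (s : Finset ι) (w c : ι → ℝ)
    (hw : ∀ i, 0 ≤ w i) (hc : ∀ i, c i ≠ 0) :
    ∑ i ∈ s, √(w i) ≤ √(∑ i ∈ s, w i / c i ^ 2) * √(∑ i ∈ s, c i ^ 2) := by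
  have hsplit : ∀ i, √(w i) = √(w i) / c i * c i := fun i => (div_mul_cancel₀ _ (hc i)).symm
  have hsq : ∀ i, (√(w i) / c i) ^ 2 = w i / c i ^ 2 := fun i => by rw [div_pow, Real.sq_sqrt (hw i)]
  simpa only [← hsplit, hsq] using Real.sum_mul_le_sqrt_mul_sqrt s (fun i => √(w i) / c i) c

theorem sqrt_sum_div_sq_mul_sqrt_sum_sq_rpow_quarter {ι : Type*} (s : Finset ι) (w : ι → ℝ)
    (hw : ∀ i, 0 ≤ w i) :
    √(∑ i ∈ s, w i / (w i ^ (1 / 4 : ℝ)) ^ 2) * √(∑ i ∈ s, (w i ^ (1 / 4 : ℝ)) ^ 2) =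
      ∑ i ∈ s, √(w i) := by
  have hsq : ∀ i, (w i ^ (1 / 4 : ℝ)) ^ 2 = √(w i) := fun i => by
    rw [← Real.rpow_mul_natCast (hw i), Real.sqrt_eq_rpow]
    norm_num
  have hdiv : ∀ i, w i / √(w i) = √(w i) := fun i => Real.div_sqrt
  simp only [hsq, hdiv]
  exact Real.mul_self_sqrt (sum_nonneg fun i _ => Real.sqrt_nonneg _)

theorem sum_sqrt_sub_eq_sum_Icc (n : ℕ) :
    ∑ j : Fin n, √((n - j : ℕ) : ℝ) = ∑ k ∈ Icc 1 n, √(k : ℝ) := by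
  rw [Fin.sum_univ_eq_sum_range (fun j => √((n - j : ℕ) : ℝ)), ← sum_range_reflect,
    ← Ico_add_one_right_eq_Icc, sum_Ico_eq_sum_range, Nat.add_sub_cancel]
  refine sum_congr rfl fun j hj => ?_
  rw [mem_range] at hj
  congr 3
  omega

theorem stmt_10_general (n : ℕ) :
    (∀ c : Fin n → ℝ, (∀ j, 0 < c j) →
      (1 / Real.sqrt n) * ∑ j ∈ Finset.Icc 1 n, Real.sqrt j ≤
      (1 / Real.sqrt n) * frob (Amat n * (Matrix.diagonal c)⁻¹) *
        norm2 ((Matrix.diagonal c).mulVec (fun _ => 1))) ∧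
    (1 / Real.sqrt n) *
      frob (Amat n *
        (Matrix.diagonal (fun j : Fin n => ((n - (j : ℕ) : ℕ) : ℝ) ^ ((1 : ℝ) / 4)))⁻¹) *
      norm2 ((Matrix.diagonal
          (fun j : Fin n => ((n - (j : ℕ) : ℕ) : ℝ) ^ ((1 : ℝ) / 4))).mulVec (fun _ => 1)) =
      (1 / Real.sqrt n) * ∑ j ∈ Finset.Icc 1 n, Real.sqrt j := by
  have hw : ∀ j : Fin n, (0 : ℝ) ≤ ((n - j : ℕ) : ℝ) := fun j => Nat.cast_nonneg _
  have hw_pos : ∀ j : Fin n, (0 : ℝ) < ((n - j : ℕ) : ℝ) := fun j => by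
    exact_mod_cast Nat.sub_pos_of_lt j.isLt
  constructor
  · intro c hc
    have hc0 : ∀ j, c j ≠ 0 := fun j => (hc j).ne'
    rw [frob_Amat_mul_inv_diagonal c hc0, norm2_diagonal_mulVec_one, mul_assoc,
      ← sum_sqrt_sub_eq_sum_Icc]
    gcongr
    exact sum_sqrt_le_sqrt_sum_div_sq_mul_sqrt_sum_sq _ _ c hw hc0
  · have hc0 : ∀ j : Fin n, ((n - j : ℕ) : ℝ) ^ ((1 : ℝ) / 4) ≠ 0 := fun j =>
      (Real.rpow_pos_of_pos (hw_pos j) _).ne'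
    rw [frob_Amat_mul_inv_diagonal _ hc0, norm2_diagonal_mulVec_one, mul_assoc,
      sqrt_sum_div_sq_mul_sqrt_sum_sq_rpow_quarter _ _ hw, sum_sqrt_sub_eq_sum_Icc]

/-- among all diagonal strategy matrices with positive diagonal entries,
the full-batch RMSE (1/√n)·‖A C⁻¹‖_F·‖Ce‖₂ is at least (1/√n)∑_{j=1}^n √j, with
equality for the diagonal entries (n − j + 1)^{1/4}. -/
theorem stmt_10 (n : ℕ) (hn : 1 ≤ n) :
    (∀ c : Fin n → ℝ, (∀ j, 0 < c j) →
      (1 / Real.sqrt n) * ∑ j ∈ Finset.Icc 1 n, Real.sqrt j ≤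
      (1 / Real.sqrt n) * frob (Amat n * (Matrix.diagonal c)⁻¹) *
        norm2 ((Matrix.diagonal c).mulVec (fun _ => 1))) ∧
    (1 / Real.sqrt n) *
      frob (Amat n *
        (Matrix.diagonal (fun j : Fin n => ((n - (j : ℕ) : ℕ) : ℝ) ^ ((1 : ℝ) / 4)))⁻¹) *
      norm2 ((Matrix.diagonal
          (fun j : Fin n => ((n - (j : ℕ) : ℕ) : ℝ) ^ ((1 : ℝ) / 4))).mulVec (fun _ => 1)) =
      (1 / Real.sqrt n) * ∑ j ∈ Finset.Icc 1 n, Real.sqrt j :=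
  stmt_10_general n
end

section
/- Let n ≥ 2, λ ∈ (0,1), and let C̃ = C_λ D^{-1} be the column-normalized DP-λCGD strategy matrix. Then for all indices 2 ≤ i ≤ j ≤ n, one has ⟨C̃_{:,i}, C̃_{:,j}⟩ ≤ ⟨C̃_{:,i−1}, C̃_{:,j−1}⟩; equivalently d_{j−1}·d_i ≥ d_{i−1}·d_j, which holds because (1 − λ²)(λ^{2(n−j+1)} − λ^{2(n−i+1)}) ≥ 0 whenever i ≤ j. -/
open Finset

/-!
With `G m = ∑_{s<m} λ^{2s}` one has `d_k² = G (n - k)`, and on the support of column `j` (rows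
`t ≥ j`) column `i ≤ j` of `C_λ` is `λ^{j-i}` times column `j`, so
`⟨C̃_{:,i}, C̃_{:,j}⟩ = λ^{j-i} d_j / d_i`. The claim thus reduces to
`G (a+1) G b ≤ G (b+1) G a` for `b ≤ a`, which is `G b ≤ G a` after expanding
`G (m+1) = λ² G m + 1`.
-/

theorem geom_sum_succ_mul_le_mul {α : Type*} [CommRing α] [PartialOrder α] [IsOrderedRing α]
    {x : α} (hx : 0 ≤ x) {a b : ℕ} (hba : b ≤ a) :
    (∑ s ∈ range (a + 1), x ^ s) * ∑ s ∈ range b, x ^ s ≤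
      (∑ s ∈ range (b + 1), x ^ s) * ∑ s ∈ range a, x ^ s := by
  have hmono : ∑ s ∈ range b, x ^ s ≤ ∑ s ∈ range a, x ^ s :=
    sum_le_sum_of_subset_of_nonneg (range_subset_range.2 hba) fun s _ _ => pow_nonneg hx s
  calc (∑ s ∈ range (a + 1), x ^ s) * ∑ s ∈ range b, x ^ s
      = x * (∑ s ∈ range a, x ^ s) * (∑ s ∈ range b, x ^ s) + ∑ s ∈ range b, x ^ s := by
        rw [geom_sum_succ]; ring
    _ ≤ x * (∑ s ∈ range a, x ^ s) * (∑ s ∈ range b, x ^ s) + ∑ s ∈ range a, x ^ s := by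
        gcongr
    _ = (∑ s ∈ range (b + 1), x ^ s) * ∑ s ∈ range a, x ^ s := by
        rw [geom_sum_succ]; ring

theorem sum_Cmat_sq (n : ℕ) (l : ℝ) (k : Fin n) :
    ∑ t, Cmat n l t k ^ 2 = ∑ s ∈ range (n - k), (l ^ 2) ^ s := by
  set f : ℕ → ℝ := fun t => (if (k : ℕ) ≤ t then l ^ (t - k) else 0) ^ 2
  calc ∑ t, Cmat n l t k ^ 2 = ∑ t ∈ range n, f t := Fin.sum_univ_eq_sum_range f n
    _ = ∑ t ∈ range (k + (n - k)), f t := by rw [Nat.add_sub_cancel' k.isLt.le]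
    _ = ∑ t ∈ range k, f t + ∑ s ∈ range (n - k), f (k + s) := sum_range_add f k (n - k)
    _ = ∑ s ∈ range (n - k), (l ^ 2) ^ s := by
        rw [sum_eq_zero fun t ht => by simp [f, (mem_range.1 ht).not_ge], zero_add]
        refine sum_congr rfl fun s _ => ?_
        simp [f, pow_right_comm]

theorem dcol_eq_sqrt (n : ℕ) (l : ℝ) (k : Fin n) :
    dcol n l k = √(∑ s ∈ range (n - k), (l ^ 2) ^ s) := by
  simp only [dcol, norm2, sum_Cmat_sq]

theorem dcol_sq (n : ℕ) (l : ℝ) (k : Fin n) :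
    dcol n l k ^ 2 = ∑ s ∈ range (n - k), (l ^ 2) ^ s := by
  rw [dcol_eq_sqrt, Real.sq_sqrt (sum_nonneg fun s _ => by positivity)]

theorem dcol_pos (n : ℕ) (l : ℝ) (k : Fin n) : 0 < dcol n l k := by
  rw [dcol_eq_sqrt, Real.sqrt_pos]
  have hk : 0 < n - (k : ℕ) := Nat.sub_pos_of_lt k.isLt
  rw [← Nat.succ_pred_eq_of_pos hk, geom_sum_succ]
  positivity

theorem Ctil_apply (n : ℕ) (l : ℝ) (t k : Fin n) :
    Ctil n l t k = Cmat n l t k / dcol n l k := by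
  have hinv : (Matrix.diagonal (dcol n l))⁻¹ = Matrix.diagonal fun k => (dcol n l k)⁻¹ := by
    refine Matrix.inv_eq_right_inv ?_
    rw [Matrix.diagonal_mul_diagonal, ← Matrix.diagonal_one]
    exact congrArg Matrix.diagonal (funext fun k => mul_inv_cancel₀ (dcol_pos n l k).ne')
  rw [Ctil, hinv, Matrix.mul_diagonal, div_eq_mul_inv]

theorem sum_Cmat_mul_Cmat (n : ℕ) (l : ℝ) {i j : Fin n} (hij : (i : ℕ) ≤ j) :
    ∑ t, Cmat n l t i * Cmat n l t j = l ^ ((j : ℕ) - i) * dcol n l j ^ 2 := by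
  rw [dcol_sq, ← sum_Cmat_sq, mul_sum]
  refine sum_congr rfl fun t _ => ?_
  by_cases htj : (j : ℕ) ≤ t
  · simp only [Cmat, if_pos htj, if_pos (hij.trans htj), ← pow_mul, ← pow_add]
    congr 1
    omega
  · simp [Cmat, htj]

theorem sum_Ctil_mul_Ctil (n : ℕ) (l : ℝ) {i j : Fin n} (hij : (i : ℕ) ≤ j) :
    ∑ t, Ctil n l t i * Ctil n l t j = l ^ ((j : ℕ) - i) * (dcol n l j / dcol n l i) := by
  have hi := (dcol_pos n l i).ne'
  have hj := (dcol_pos n l j).ne'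
  simp only [Ctil_apply, div_mul_div_comm, ← sum_div, sum_Cmat_mul_Cmat n l hij]
  field_simp

theorem dcol_pred_mul_le (n : ℕ) (l : ℝ) {i j i' j' : Fin n} (hi : 1 ≤ (i : ℕ))
    (hij : (i : ℕ) ≤ j) (hi' : (i' : ℕ) = i - 1) (hj' : (j' : ℕ) = j - 1) :
    dcol n l i' * dcol n l j ≤ dcol n l j' * dcol n l i := by
  have hG : ∀ m, 0 ≤ ∑ s ∈ range m, (l ^ 2) ^ s := fun m => sum_nonneg fun s _ => by positivity
  simp only [dcol_eq_sqrt, ← Real.sqrt_mul (hG _)]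
  refine Real.sqrt_le_sqrt ?_
  have hj := j.isLt
  rw [hi', hj', show n - (i - 1 : ℕ) = n - i + 1 by omega, show n - (j - 1 : ℕ) = n - j + 1 by omega]
  exact geom_sum_succ_mul_le_mul (sq_nonneg l) (by omega)

theorem sum_Ctil_mul_Ctil_le_pred (n : ℕ) {l : ℝ} (hl : 0 ≤ l) {i j i' j' : Fin n}
    (hi : 1 ≤ (i : ℕ)) (hij : (i : ℕ) ≤ j) (hi' : (i' : ℕ) = i - 1) (hj' : (j' : ℕ) = j - 1) :
    ∑ t, Ctil n l t i * Ctil n l t j ≤ ∑ t, Ctil n l t i' * Ctil n l t j' := by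
  rw [sum_Ctil_mul_Ctil n l hij, sum_Ctil_mul_Ctil n l (by omega : (i' : ℕ) ≤ j'),
    show (j' : ℕ) - i' = j - i by omega]
  refine mul_le_mul_of_nonneg_left ?_ (pow_nonneg hl _)
  rw [div_le_div_iff₀ (dcol_pos n l i) (dcol_pos n l i'), mul_comm]
  exact dcol_pred_mul_le n l hi hij hi' hj'

/-- for columns 2 ≤ i ≤ j ≤ n (1-indexed, i.e. Fin-indices with
1 ≤ i ≤ j) of C̃ = C_λ D⁻¹, ⟨C̃_{:,i}, C̃_{:,j}⟩ ≤ ⟨C̃_{:,i−1}, C̃_{:,j−1}⟩;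
equivalently d_{j−1}·d_i ≥ d_{i−1}·d_j, which holds because
(1 − λ²)(λ^{2(n−j+1)} − λ^{2(n−i+1)}) ≥ 0 whenever i ≤ j. -/
theorem stmt_15 (n : ℕ) (l : ℝ) (hl : l ∈ Set.Ioo (0 : ℝ) 1)
    (i j : Fin n) (hi : 1 ≤ (i : ℕ)) (hij : i ≤ j) :
    (∑ t, Ctil n l t i * Ctil n l t j) ≤
      (∑ t, Ctil n l t ⟨(i : ℕ) - 1, by have := i.isLt; omega⟩ *
        Ctil n l t ⟨(j : ℕ) - 1, by have := j.isLt; omega⟩) ∧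
    dcol n l ⟨(i : ℕ) - 1, by have := i.isLt; omega⟩ * dcol n l j ≤
      dcol n l ⟨(j : ℕ) - 1, by have := j.isLt; omega⟩ * dcol n l i ∧
    0 ≤ (1 - l ^ 2) * (l ^ (2 * (n - (j : ℕ))) - l ^ (2 * (n - (i : ℕ)))) := by
  obtain ⟨hl0, hl1⟩ := hl
  have hij' : (i : ℕ) ≤ j := hij
  refine ⟨sum_Ctil_mul_Ctil_le_pred n hl0.le hi hij' rfl rfl,
    dcol_pred_mul_le n l hi hij' rfl rfl, mul_nonneg ?_ ?_⟩
  · exact sub_nonneg.2 (pow_le_one₀ hl0.le hl1.le)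
  · exact sub_nonneg.2 (pow_le_pow_of_le_one hl0.le hl1.le (by omega))
end
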